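/- arXiv:2602.20783 — 7 statements merged into one kernel-verified Lean document; each statement's English description precedes it below -/
import Mathlib

section
/- If 𝔤 is an induced Hoffman signed subgraph of a Hoffman signed graph 𝔥, then λ_min(𝔤) ≥ λ_min(𝔥), where λ_min denotes the smallest eigenvalue of the special matrix. In particular, the slim graph (H_s,σ_s) of 𝔥 satisfies λ_min(H_s,σ_s) ≥ λ_min(𝔥). -/
open Matrix Pointwise

/-- If `M - lam • 1` is positive semidefinite, then every real spectral value of `M`
is at least `lam`. -/
lemma psd_spec_ge {n : Type} [Fintype n] [DecidableEq n] {M : Matrix n n ℝ} {lam : ℝ}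
    (h : (M - lam • 1).PosSemidef) : ∀ μ ∈ spectrum ℝ M, lam ≤ μ := by
  intro μ hμ
  rw [spectrum.mem_iff] at hμ
  have hdet : (algebraMap ℝ (Matrix n n ℝ) μ - M).det = 0 := by
    by_contra hd
    exact hμ ((Matrix.isUnit_iff_isUnit_det _).mpr (isUnit_iff_ne_zero.mpr hd))
  obtain ⟨v, hv0, hv⟩ := (Matrix.exists_mulVec_eq_zero_iff).mpr hdet
  have hMv : M *ᵥ v = μ • v := by
    have : (algebraMap ℝ (Matrix n n ℝ) μ - M) *ᵥ v = 0 := hv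
    rw [Matrix.sub_mulVec] at this
    have h2 : algebraMap ℝ (Matrix n n ℝ) μ *ᵥ v = μ • v := by
      rw [Algebra.algebraMap_eq_smul_one]
      simp [Matrix.smul_mulVec]
    rw [h2, sub_eq_zero] at this
    exact this.symm
  have hq : 0 ≤ star v ⬝ᵥ ((M - lam • 1) *ᵥ v) := h.dotProduct_mulVec_nonneg v
  have hvv : 0 < v ⬝ᵥ v := by
    have hnn : 0 ≤ v ⬝ᵥ v := Finset.sum_nonneg fun i _ => mul_self_nonneg (v i)
    rcases lt_or_eq_of_le hnn with h' | h'
    · exact h'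
    · exact absurd (dotProduct_self_eq_zero.mp h'.symm) hv0
  have hcalc : star v ⬝ᵥ ((M - lam • 1) *ᵥ v) = (μ - lam) * (v ⬝ᵥ v) := by
    rw [Matrix.sub_mulVec, hMv]
    simp [Matrix.smul_mulVec, dotProduct_sub, dotProduct_smul,
      star_trivial, sub_mul, smul_eq_mul]
  rw [hcalc] at hq
  nlinarith

/-- If `M` is Hermitian and every real spectral value of `M` is at least `lam`,
then `M - lam • 1` is positive semidefinite. -/
lemma spec_ge_psd {n : Type} [Fintype n] [DecidableEq n] {M : Matrix n n ℝ} {lam : ℝ}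
    (hM : M.IsHermitian) (h : ∀ μ ∈ spectrum ℝ M, lam ≤ μ) :
    (M - lam • 1).PosSemidef := by
  have hH : (M - lam • 1).IsHermitian := by
    refine hM.sub ?_
    simp [Matrix.IsHermitian]
  refine hH.posSemidef_iff_eigenvalues_nonneg.mpr fun i => (?_ : (0 : ℝ) ≤ hH.eigenvalues i)
  have hmem : hH.eigenvalues i ∈ spectrum ℝ (M - lam • 1) :=
    hH.eigenvalues_mem_spectrum_real i
  have hsm : (lam • (1 : Matrix n n ℝ)) = algebraMap ℝ (Matrix n n ℝ) lam :=
    (Algebra.algebraMap_eq_smul_one lam).symm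
  have hspec : spectrum ℝ (M - lam • 1) = (spectrum ℝ M - {lam} : Set ℝ) := by
    rw [hsm]
    exact (spectrum.sub_singleton_eq M lam).symm
  have hmem' := hspec ▸ hmem
  obtain ⟨μ, hμ, r, hr, hrfl⟩ := Set.mem_sub.mp hmem'
  rw [Set.mem_singleton_iff] at hr
  subst hr
  have := h μ hμ
  linarith [hrfl ▸ sub_nonneg.mpr this]

/-- The smallest special eigenvalue of an induced Hoffman signed subgraph (slim
vertices along `f`, fat vertices along `g`) is at least that of the whole Hoffman
signed graph; in particular this holds for the slim graph itself. -/
theorem stmt4 {S F S' F' : Type}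
    [Fintype S] [DecidableEq S] [Fintype F] [DecidableEq F]
    [Fintype S'] [DecidableEq S'] [Fintype F'] [DecidableEq F']
    (As : Matrix S S ℝ) (C : Matrix S F ℝ) (hAs : As.IsSymm)
    (f : S' ↪ S) (g : F' ↪ F) (lam : ℝ)
    (hlam : ∀ μ ∈ spectrum ℝ (As - C * Cᵀ), lam ≤ μ) :
    (∀ μ ∈ spectrum ℝ
        (As.submatrix f f - C.submatrix f g * (C.submatrix f g)ᵀ), lam ≤ μ) ∧
    (∀ μ ∈ spectrum ℝ As, lam ≤ μ) := by
  have hCt : Cᴴ = Cᵀ := Matrix.conjTranspose_eq_transpose_of_trivial C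
  have hCC : (C * Cᵀ).PosSemidef := by
    have := Matrix.posSemidef_self_mul_conjTranspose C
    rwa [hCt] at this
  have hHer : (As - C * Cᵀ).IsHermitian := by
    refine Matrix.IsHermitian.sub ?_ hCC.isHermitian
    rw [Matrix.IsHermitian, Matrix.conjTranspose_eq_transpose_of_trivial]
    exact hAs
  have hPSD : (As - C * Cᵀ - lam • 1).PosSemidef := spec_ge_psd hHer hlam
  constructor
  · -- induced subgraph part
    set T := {x : F // x ∈ (Finset.univ.map g)ᶜ} with hT
    set B : Matrix S' T ℝ := Matrix.of (fun i k => C (f i) k.1) with hB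
    have hBt : Bᴴ = Bᵀ := Matrix.conjTranspose_eq_transpose_of_trivial B
    have hBB : (B * Bᵀ).PosSemidef := by
      have := Matrix.posSemidef_self_mul_conjTranspose B
      rwa [hBt] at this
    have key : C.submatrix f g * (C.submatrix f g)ᵀ + B * Bᵀ = (C * Cᵀ).submatrix f f := by
      ext i j
      simp only [Matrix.add_apply, Matrix.mul_apply, Matrix.submatrix_apply,
        Matrix.transpose_apply, hB, Matrix.of_apply]
      rw [← Finset.sum_add_sum_compl (Finset.univ.map g)
        (fun k => C (f i) k * C (f j) k)]
      congr 1
      · rw [Finset.sum_map]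
      · exact Finset.sum_coe_sort ((Finset.univ.map g)ᶜ)
          (fun k => C (f i) k * C (f j) k)
    have hdecomp : As.submatrix f f - C.submatrix f g * (C.submatrix f g)ᵀ - lam • 1 =
        (As - C * Cᵀ - lam • 1).submatrix f f + B * Bᵀ := by
      ext i j
      have hk := congrFun (congrFun key i) j
      simp only [Matrix.add_apply, Matrix.submatrix_apply] at hk
      simp only [Matrix.sub_apply, Matrix.submatrix_apply, Matrix.add_apply,
        Matrix.smul_apply, Matrix.one_apply, smul_eq_mul, f.injective.eq_iff]
      rw [← hk]
      ring
    apply psd_spec_ge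
    rw [hdecomp]
    exact (hPSD.submatrix f).add hBB
  · -- slim graph part
    apply psd_spec_ge (M := As)
    have : As - lam • 1 = (As - C * Cᵀ - lam • 1) + C * Cᵀ := by abel
    rw [this]
    exact hPSD.add hCC
end

section
/- Let S be a real symmetric matrix indexed by a finite set with all eigenvalues ≥ -m for some integer m ≥ 0 such that S + m·I has integer entries. Then there exists a real matrix L with S + m·I = L L^T (Cholesky-type factorization), and consequently a Hoffman signed graph with special matrix S admits a representation of norm m built from the rows of L together with standard unit vectors for fat vertices. -/
open Matrix

/-- If the special matrix `S = Aₛ - C Cᵀ` of a Hoffman signed graph has all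
eigenvalues at least `-m` and `S + m•I` has integer entries, then `S + m•I`
admits a factorization `L Lᵀ`, and the Hoffman signed graph admits a
representation of norm `m` (rows of `L` together with standard unit vectors
for the fat vertices). -/
theorem stmt6 {S F : Type} [Fintype S] [DecidableEq S] [Fintype F] [DecidableEq F]
    (As : Matrix S S ℝ) (C : Matrix S F ℝ)
    (hAs : As.IsSymm) (hdiag : ∀ x, As x x = 0) (m : ℕ)
    (hev : ∀ μ ∈ spectrum ℝ (As - C * Cᵀ), -(m : ℝ) ≤ μ)
    (hint : ∃ T : Matrix S S ℤ,
        (As - C * Cᵀ) + (m : ℝ) • 1 = T.map (Int.cast : ℤ → ℝ)) :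
    (∃ L : Matrix S S ℝ, (As - C * Cᵀ) + (m : ℝ) • 1 = L * Lᵀ) ∧
    ∃ (n : ℕ) (φ : S ⊕ F → (Fin n → ℝ)),
      (∀ x, ∑ i, φ (.inl x) i * φ (.inl x) i = (m : ℝ)) ∧
      (∀ y, ∑ i, φ (.inr y) i * φ (.inr y) i = 1) ∧
      (∀ x x', x ≠ x' → ∑ i, φ (.inl x) i * φ (.inl x') i = As x x') ∧
      (∀ x y, ∑ i, φ (.inl x) i * φ (.inr y) i = C x y) ∧
      (∀ y y', y ≠ y' → ∑ i, φ (.inr y) i * φ (.inr y') i = 0) := by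
  set Sp : Matrix S S ℝ := As - C * Cᵀ with hSp
  set M : Matrix S S ℝ := Sp + (m : ℝ) • 1 with hM
  -- M is Hermitian
  have hSpH : Sp.IsHermitian := by
    have h1 : Sp.IsSymm := by
      rw [hSp, Matrix.IsSymm, Matrix.transpose_sub, hAs, Matrix.transpose_mul,
        Matrix.transpose_transpose]
    exact Matrix.isHermitian_iff_isSymm.mpr h1
  have hsmulH : ((m : ℝ) • (1 : Matrix S S ℝ)).IsHermitian := by
    ext i j
    simp [Matrix.IsHermitian, Matrix.conjTranspose_apply, Matrix.one_apply, eq_comm]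
  have hMH : M.IsHermitian := hSpH.add hsmulH
  have hMalg : M = algebraMap ℝ (Matrix S S ℝ) (m : ℝ) + Sp := by
    rw [hM, Algebra.algebraMap_eq_smul_one, add_comm]
  -- all elements of the real spectrum of M are nonnegative
  have hspec : ∀ μ ∈ spectrum ℝ M, 0 ≤ μ := by
    intro μ hμ
    rw [hMalg] at hμ
    have h1 : (μ - (m : ℝ)) + (m : ℝ) ∈ spectrum ℝ
        (algebraMap ℝ (Matrix S S ℝ) (m : ℝ) + Sp) := by simpa using hμ
    have h2 : μ - (m : ℝ) ∈ spectrum ℝ Sp :=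
      (spectrum.add_mem_add_iff).mp h1
    have := hev _ h2
    linarith
  have hpsd : M.PosSemidef := by
    apply hMH.posSemidef_iff_eigenvalues_nonneg.mpr
    intro i
    exact hspec _ (hMH.eigenvalues_mem_spectrum_real i)
  obtain ⟨B, hB⟩ : ∃ B : Matrix S S ℝ, M = Bᴴ * B := by
    open MatrixOrder in
    obtain ⟨X, hX, -, hXX⟩ := CFC.exists_sqrt_of_isSelfAdjoint_of_quasispectrumRestricts
      hpsd.isHermitian (QuasispectrumRestricts.nnreal_of_nonneg hpsd.nonneg)
    exact ⟨X, by rw [← Matrix.star_eq_conjTranspose, hX.star_eq]; exact hXX.symm⟩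
  have hBT : Bᴴ = Bᵀ := by
    ext i j; simp [Matrix.conjTranspose_apply]
  have hfac : M = Bᵀ * (Bᵀ)ᵀ := by
    rw [hB, hBT, Matrix.transpose_transpose]
  refine ⟨⟨Bᵀ, hfac⟩, ?_⟩
  set L : Matrix S S ℝ := Bᵀ with hL
  have hent : ∀ x x', M x x' = ∑ j, L x j * L x' j := by
    intro x x'
    rw [hfac]
    simp [Matrix.mul_apply, Matrix.transpose_apply]
  -- the representation
  let e : Fin (Fintype.card (S ⊕ F)) ≃ S ⊕ F := (Fintype.equivFin (S ⊕ F)).symm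
  let ψ : S ⊕ F → (S ⊕ F) → ℝ := fun v w =>
    match v, w with
    | .inl x, .inl x' => L x x'
    | .inl x, .inr y => C x y
    | .inr _, .inl _ => 0
    | .inr y, .inr y' => if y = y' then 1 else 0
  have key : ∀ v w : S ⊕ F, ∑ i, ψ v (e i) * ψ w (e i) = ∑ u, ψ v u * ψ w u := by
    intro v w
    exact Fintype.sum_equiv e _ _ (fun i => rfl)
  refine ⟨Fintype.card (S ⊕ F), fun v i => ψ v (e i), ?_, ?_, ?_, ?_, ?_⟩
  · intro x
    rw [key, Fintype.sum_sum_type]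
    have h1 : ∑ x', ψ (Sum.inl x) (Sum.inl x') * ψ (Sum.inl x) (Sum.inl x')
        = M x x := (hent x x).symm
    have h2 : ∑ y, ψ (Sum.inl x) (Sum.inr y) * ψ (Sum.inl x) (Sum.inr y)
        = (C * Cᵀ) x x := by simp [ψ, Matrix.mul_apply]
    rw [h1, h2, hM, hSp]
    simp [Matrix.one_apply, hdiag x]
  · intro y
    rw [key, Fintype.sum_sum_type]
    simp [ψ]
  · intro x x' hxx'
    rw [key, Fintype.sum_sum_type]
    have h1 : ∑ j, ψ (Sum.inl x) (Sum.inl j) * ψ (Sum.inl x') (Sum.inl j)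
        = M x x' := (hent x x').symm
    have h2 : ∑ y, ψ (Sum.inl x) (Sum.inr y) * ψ (Sum.inl x') (Sum.inr y)
        = (C * Cᵀ) x x' := by simp [ψ, Matrix.mul_apply]
    rw [h1, h2, hM, hSp]
    simp [Matrix.one_apply, hxx']
  · intro x y
    rw [key, Fintype.sum_sum_type]
    simp [ψ]
  · intro y y' hyy'
    rw [key, Fintype.sum_sum_type]
    simp [ψ, hyy']
end

section
/- Every connected signed graph with smallest adjacency eigenvalue strictly greater than -√2 is switching equivalent to a complete graph with all edges positive. -/
open Matrix

private lemma quad_expand {V : Type} [Fintype V] [DecidableEq V] (A : Matrix V V ℝ)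
    (x y z : V) (a b c : ℝ) :
    (Pi.single x a + Pi.single y b + Pi.single z c) ⬝ᵥ
      (A *ᵥ (Pi.single x a + Pi.single y b + Pi.single z c)) =
    a*(A x x*a) + a*(A x y*b) + a*(A x z*c) + (b*(A y x*a)+b*(A y y*b)+b*(A y z*c))
      + (c*(A z x*a)+c*(A z y*b)+c*(A z z*c)) := by
  simp only [mulVec_add, mulVec_single, add_dotProduct, dotProduct_add, single_dotProduct,
    Pi.smul_apply, op_smul_eq_mul, col_apply]
  ring

private lemma norm_expand {V : Type} [Fintype V] [DecidableEq V]
    (x y z : V) (hxy : x ≠ y) (hxz : x ≠ z) (hyz : y ≠ z) (a b c : ℝ) :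
    (Pi.single x a + Pi.single y b + Pi.single z c) ⬝ᵥ
      (Pi.single x a + Pi.single y b + Pi.single z c) = a*a + b*b + c*c := by
  simp [add_dotProduct, dotProduct_add, single_dotProduct, Pi.single_apply, hxy, hxz, hyz,
    hxy.symm, hxz.symm, hyz.symm]

/-- Every connected signed graph whose smallest adjacency eigenvalue is strictly
greater than `-√2` is switching equivalent to an all-positive complete graph. -/
theorem stmt10 {V : Type} [Fintype V] [DecidableEq V]
    (G : SimpleGraph V) [DecidableRel G.Adj] (hG : G.Connected)
    (σ : V → V → ℝ) (hσsym : ∀ x y, σ x y = σ y x)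
    (hσval : ∀ x y, G.Adj x y → σ x y = 1 ∨ σ x y = -1)
    (A : Matrix V V ℝ)
    (hA : A = Matrix.of fun x y => if G.Adj x y then σ x y else 0)
    (hev : ∀ μ ∈ spectrum ℝ A, -Real.sqrt 2 < μ) :
    ∃ ε : V → ℝ, (∀ x, ε x = 1 ∨ ε x = -1) ∧
      ∀ x y, ε x * A x y * ε y = if x = y then 0 else 1 := by
  have hAdiag : ∀ x, A x x = 0 := by
    intro x; simp [hA, G.irrefl]
  have hAsym : ∀ x y, A x y = A y x := by
    intro x y
    by_cases h : G.Adj x y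
    · simp [hA, h, h.symm, hσsym x y]
    · have h' : ¬ G.Adj y x := fun hc => h hc.symm
      simp [hA, h, h']
  have hAadj : ∀ x y, G.Adj x y → A x y = σ x y := by
    intro x y h; simp [hA, h]
  have hAval : ∀ x y, G.Adj x y → A x y = 1 ∨ A x y = -1 := by
    intro x y h; rw [hAadj x y h]; exact hσval x y h
  have hAsq : ∀ x y, G.Adj x y → A x y * A x y = 1 := by
    intro x y h; rcases hAval x y h with h1 | h1 <;> rw [h1] <;> norm_num
  have hAnadj : ∀ x y, ¬ G.Adj x y → A x y = 0 := by
    intro x y h; simp [hA, h]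
  -- The shifted matrix is positive semidefinite
  have hAherm : A.IsHermitian := by
    ext i j
    simp only [conjTranspose_apply, star_trivial]
    exact hAsym j i
  set s2 : ℝ := Real.sqrt 2 with hs2
  have hs2pos : 0 < s2 := Real.sqrt_pos.mpr (by norm_num)
  have hs2sq : s2 * s2 = 2 := Real.mul_self_sqrt (by norm_num)
  set A' : Matrix V V ℝ := A + s2 • (1 : Matrix V V ℝ) with hA'
  have hA'eq : A' = A + algebraMap ℝ (Matrix V V ℝ) s2 := by
    rw [hA', Algebra.algebraMap_eq_smul_one]
  have hA'symm : ∀ i j, A' i j = A' j i := by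
    intro i j
    simp only [hA', Matrix.add_apply, Matrix.smul_apply, Matrix.one_apply, hAsym i j]
    by_cases h : i = j
    · simp [h]
    · simp [h, Ne.symm h]
  have hA'herm : A'.IsHermitian := by
    ext i j
    simp only [conjTranspose_apply, star_trivial]
    exact hA'symm j i
  have hPS : A'.PosSemidef := by
    apply hA'herm.posSemidef_iff_eigenvalues_nonneg.mpr
    intro i
    show (0:ℝ) ≤ hA'herm.eigenvalues i
    have hmem : hA'herm.eigenvalues i ∈ spectrum ℝ A' := hA'herm.eigenvalues_mem_spectrum_real i
    set μ := hA'herm.eigenvalues i with hμ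
    have hA'eq' : A' = algebraMap ℝ (Matrix V V ℝ) s2 + A := by
      rw [hA', Algebra.algebraMap_eq_smul_one, add_comm]
    have hmem2 : μ ∈ spectrum ℝ (algebraMap ℝ (Matrix V V ℝ) s2 + A) := by
      rw [← hA'eq']; exact hmem
    have h3 : μ - s2 + s2 ∈ spectrum ℝ (algebraMap ℝ (Matrix V V ℝ) s2 + A) := by
      rwa [sub_add_cancel]
    have h4 : μ - s2 ∈ spectrum ℝ A := spectrum.add_mem_add_iff.mp h3
    have h5 := hev _ h4
    linarith
  have hQ : ∀ v : V → ℝ, 0 ≤ v ⬝ᵥ (A' *ᵥ v) := by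
    intro v
    have := hPS.dotProduct_mulVec_nonneg v
    simpa using this
  have hA'form : ∀ v : V → ℝ, v ⬝ᵥ (A' *ᵥ v) = v ⬝ᵥ (A *ᵥ v) + s2 * (v ⬝ᵥ v) := by
    intro v
    rw [hA', add_mulVec, dotProduct_add, smul_mulVec, one_mulVec, dotProduct_smul,
      smul_eq_mul]
  -- No induced path of length 2: adjacency is "transitive" on distinct vertices
  have hP3 : ∀ x y z : V, x ≠ z → G.Adj x y → G.Adj y z → G.Adj x z := by
    intro x y z hxz hxy hyz
    by_contra hnadj
    have hxy' : x ≠ y := hxy.ne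
    have hyz' : y ≠ z := hyz.ne
    set v : V → ℝ := Pi.single x (-(A x y)) + Pi.single y s2 + Pi.single z (-(A y z)) with hv
    have hvy : v y = s2 := by
      simp [hv, Pi.single_apply, hxy'.symm, hyz']
    have hvne : v ≠ 0 := by
      intro hc
      have h0 : (0:ℝ) = s2 := by rw [← hvy, hc]; simp
      exact ne_of_gt hs2pos h0.symm
    have hQv : v ⬝ᵥ (A' *ᵥ v) = 0 := by
      rw [hA'form, hv, quad_expand, norm_expand x y z hxy' hxz hyz']
      rw [hAdiag x, hAdiag y, hAdiag z, hAnadj x z hnadj, hAnadj z x (fun h => hnadj h.symm),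
        ← hAsym x y, ← hAsym y z]
      have h1 := hAsq x y hxy
      have h2 := hAsq y z hyz
      linear_combination (-s2) * h1 + (-s2) * h2 + s2 * hs2sq
    -- then v is an eigenvector of A with eigenvalue -√2, contradiction
    have hker : A' *ᵥ v = 0 := by
      have := (hPS.dotProduct_mulVec_zero_iff v).mp (by simpa using hQv)
      exact this
    have hspec : -s2 ∈ spectrum ℝ A := by
      rw [spectrum.mem_iff]
      intro hunit
      have hM : (algebraMap ℝ (Matrix V V ℝ) (-s2) - A) *ᵥ v = 0 := by
        rw [sub_mulVec, Algebra.algebraMap_eq_smul_one, smul_mulVec, one_mulVec]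
        have : A *ᵥ v + s2 • v = 0 := by
          rw [← hker, hA', add_mulVec, smul_mulVec, one_mulVec]
        have hAv : A *ᵥ v = -(s2 • v) := eq_neg_of_add_eq_zero_left this
        rw [hAv]
        ext i
        simp [neg_smul]
      obtain ⟨u, hu⟩ := hunit
      have : v = 0 := by
        have h1 : (↑u⁻¹ : Matrix V V ℝ) *ᵥ ((↑u : Matrix V V ℝ) *ᵥ v) = v := by
          rw [mulVec_mulVec, Units.inv_mul, one_mulVec]
        rw [← h1, hu, hM, mulVec_zero]
      exact hvne this
    exact absurd (hev _ hspec) (lt_irrefl _)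
  -- all triangles are balanced
  have hBal : ∀ x y z : V, x ≠ y → x ≠ z → y ≠ z →
      G.Adj x y → G.Adj y z → G.Adj x z → A x y * A y z * A x z = 1 := by
    intro x y z hxy hxz hyz haxy hayz haxz
    rcases hAval x y haxy with h1 | h1 <;> rcases hAval y z hayz with h2 | h2 <;>
      rcases hAval x z haxz with h3 | h3 <;>
      first
        | (rw [h1, h2, h3]; norm_num; done)
        | (exfalso
           set v : V → ℝ := Pi.single x 1 + Pi.single y (-(A x y)) + Pi.single z (A x y * A y z)
             with hv
           have hQv := hQ v
           rw [hA'form, hv, quad_expand, norm_expand x y z hxy hxz hyz] at hQv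
           rw [hAdiag x, hAdiag y, hAdiag z, ← hAsym x y, ← hAsym y z, ← hAsym x z] at hQv
           rw [h1, h2, h3] at hQv
           nlinarith [hQv, hs2sq, hs2pos])
  -- completeness
  have hcomp : ∀ x y : V, x ≠ y → G.Adj x y := by
    have key : ∀ {x y : V} (_ : G.Walk x y), x = y ∨ G.Adj x y := by
      intro x y w
      induction w with
      | nil => exact Or.inl rfl
      | @cons u v w h p ih =>
        rcases ih with rfl | hadj
        · exact Or.inr h
        · by_cases huw : u = w
          · exact Or.inl huw
          · exact Or.inr (hP3 u v w huw h hadj)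
      
    intro x y hxy
    obtain ⟨w⟩ := hG.preconnected x y
    rcases key w with rfl | hadj
    · exact absurd rfl hxy
    · exact hadj
  -- construct the switching
  obtain ⟨v0⟩ : Nonempty V := hG.nonempty
  refine ⟨fun x => if x = v0 then 1 else A v0 x, ?_, ?_⟩
  · intro x
    by_cases hx : x = v0
    · simp [hx]
    · simp only [if_neg hx]
      exact hAval v0 x (hcomp v0 x (fun h => hx h.symm))
  · intro x y
    by_cases hxy : x = y
    · subst hxy
      simp [hAdiag x]
    · simp only [if_neg hxy]
      by_cases hx : x = v0 <;> by_cases hy : y = v0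
      · exact absurd (hx.trans hy.symm) hxy
      · subst hx
        simp only [if_pos rfl, if_true, if_neg hy, one_mul]
        exact hAsq x y (hcomp x y hxy)
      · subst hy
        simp only [if_pos rfl, if_true, if_neg hx, mul_one]
        rw [hAsym x y]
        exact hAsq y x (hcomp y x (fun h => hxy h.symm))
      · simp only [if_neg hx, if_neg hy]
        exact hBal v0 x y (fun h => hx h.symm) (fun h => hy h.symm) hxy
          (hcomp v0 x (fun h => hx h.symm)) (hcomp x y hxy) (hcomp v0 y (fun h => hy h.symm))
end

section
/- If a signed graph contains no induced subgraph switching equivalent to (K_3,-) or (K_{1,2},+), then it is switching equivalent to a disjoint union of complete graphs with all edges positive. -/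
open Matrix

/-- A signed graph with no induced subgraph switching equivalent to `(K₃,-)` or
`(K_{1,2},+)` is switching equivalent to a disjoint union of all-positive complete
graphs: some switching makes every edge positive, and adjacency is transitive on
distinct vertices (components are complete). -/
theorem stmt12 {V : Type} [Fintype V] [DecidableEq V]
    (G : SimpleGraph V) [DecidableRel G.Adj]
    (σ : V → V → ℝ) (hσsym : ∀ x y, σ x y = σ y x)
    (hσval : ∀ x y, G.Adj x y → σ x y = 1 ∨ σ x y = -1)
    (A : Matrix V V ℝ)
    (hA : A = Matrix.of fun x y => if G.Adj x y then σ x y else 0)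
    (hfree : ¬ ∃ (f : Fin 3 ↪ V) (ε : Fin 3 → ℝ), (∀ i, ε i = 1 ∨ ε i = -1) ∧
      ((∀ i j, ε i * A (f i) (f j) * ε j
          = !![(0 : ℝ), -1, -1; -1, 0, -1; -1, -1, 0] i j) ∨
       (∀ i j, ε i * A (f i) (f j) * ε j
          = !![(0 : ℝ), 1, 1; 1, 0, 0; 1, 0, 0] i j))) :
    ∃ ε : V → ℝ, (∀ x, ε x = 1 ∨ ε x = -1) ∧
      (∀ x y, G.Adj x y → ε x * σ x y * ε y = 1) ∧
      (∀ x y z, G.Adj x y → G.Adj y z → x ≠ z → G.Adj x z) := by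
  subst hA
  -- transitivity of adjacency on distinct vertices
  have htrans : ∀ x y z, G.Adj x y → G.Adj y z → x ≠ z → G.Adj x z := by
    intro x y z hxy hyz hxz
    by_contra hnadj
    apply hfree
    have hyx : G.Adj y x := hxy.symm
    have hne1 : y ≠ x := hyx.ne
    have hne2 : y ≠ z := hyz.ne
    have hσ1 : σ y x = 1 ∨ σ y x = -1 := hσval y x hyx
    have hσ2 : σ y z = 1 ∨ σ y z = -1 := hσval y z hyz
    have hsq1 : σ y x * σ y x = 1 := by rcases hσ1 with h | h <;> rw [h] <;> norm_num
    have hsq2 : σ y z * σ y z = 1 := by rcases hσ2 with h | h <;> rw [h] <;> norm_num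
    have hnzx : ¬ G.Adj z x := fun h => hnadj h.symm
    refine ⟨⟨![y, x, z], ?_⟩, ![1, σ y x, σ y z], ?_, Or.inr ?_⟩
    · intro i j h
      fin_cases i <;> fin_cases j <;> simp at h <;>
        first
          | rfl
          | exact absurd h hne1
          | exact absurd h hne2
          | exact absurd h hxz
          | exact absurd h.symm hne1
          | exact absurd h.symm hne2
          | exact absurd h.symm hxz
    · intro i
      fin_cases i
      · exact Or.inl rfl
      · simpa using hσ1
      · simpa using hσ2
    · intro i j
      show (![1, σ y x, σ y z] : Fin 3 → ℝ) i * Matrix.of (fun x y => if G.Adj x y then σ x y else 0) (![y, x, z] i) (![y, x, z] j) * (![1, σ y x, σ y z] : Fin 3 → ℝ) j = _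
      fin_cases i <;> fin_cases j <;>
        simp [hxy, hyz, hyx, hxy.symm, hyz.symm, hnadj, hnzx, G.irrefl, Matrix.vecHead, Matrix.vecTail] <;>
        first
          | rw [hσsym x y]; linarith [hsq1]
          | rw [hσsym z y]; linarith [hsq2]
          | linarith [hsq1, hsq2]
  -- no negative triangles
  have hnt : ∀ a b c, G.Adj a b → G.Adj b c → G.Adj a c →
      σ a b * σ b c * σ a c = 1 := by
    intro a b c hab hbc hac
    by_contra hne
    have h1 := hσval a b hab
    have h2 := hσval b c hbc
    have h3 := hσval a c hac
    have hprod : σ a b * σ b c * σ a c = -1 := by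
      rcases h1 with h1 | h1 <;> rcases h2 with h2 | h2 <;> rcases h3 with h3 | h3 <;>
        rw [h1, h2, h3] at hne ⊢ <;> norm_num at hne <;> norm_num
    apply hfree
    have hab' : a ≠ b := hab.ne
    have hbc' : b ≠ c := hbc.ne
    have hac' : a ≠ c := hac.ne
    have hsq1 : σ a b * σ a b = 1 := by rcases h1 with h | h <;> rw [h] <;> norm_num
    have hsq3 : σ a c * σ a c = 1 := by rcases h3 with h | h <;> rw [h] <;> norm_num
    refine ⟨⟨![a, b, c], ?_⟩, ![1, -σ a b, -σ a c], ?_, Or.inl ?_⟩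
    · intro i j h
      fin_cases i <;> fin_cases j <;> simp at h <;>
        first
          | rfl
          | exact absurd h hab'
          | exact absurd h hbc'
          | exact absurd h hac'
          | exact absurd h.symm hab'
          | exact absurd h.symm hbc'
          | exact absurd h.symm hac'
    · intro i
      fin_cases i
      · exact Or.inl rfl
      · rcases h1 with h | h <;> simp [h]
      · rcases h3 with h | h <;> simp [h]
    · intro i j
      show (![1, -σ a b, -σ a c] : Fin 3 → ℝ) i * Matrix.of (fun x y => if G.Adj x y then σ x y else 0) (![a, b, c] i) (![a, b, c] j) * (![1, -σ a b, -σ a c] : Fin 3 → ℝ) j = _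
      fin_cases i <;> fin_cases j <;>
        simp [hab, hbc, hac, hab.symm, hbc.symm, hac.symm, G.irrefl, Matrix.vecHead, Matrix.vecTail] <;>
        first
          | linarith [hsq1, hsq3]
          | (rw [hσsym b a]; linarith [hsq1])
          | (rw [hσsym c a]; linarith [hsq3])
          | (rw [hσsym c b]; nlinarith [hprod, hsq1, hsq3])
  -- reachable distinct vertices are adjacent
  have hreach : ∀ x y : V, G.Reachable x y → x ≠ y → G.Adj x y := by
    intro x y h
    obtain ⟨p⟩ := h
    induction p with
    | nil => intro h; exact absurd rfl h
    | cons huv p ih =>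
      intro hne
      rename_i u v w
      by_cases hvw : v = w
      · exact hvw ▸ huv
      · exact htrans u v w huv (ih hvw) hne
  -- the switching function via component representatives
  let r : V → V := fun x => (G.connectedComponentMk x).out
  have hrreach : ∀ x, G.Reachable (r x) x := by
    intro x
    exact SimpleGraph.ConnectedComponent.exact ((G.connectedComponentMk x).out_eq)
  have hradj : ∀ x y, G.Adj x y → r x = r y := by
    intro x y hxy
    exact congrArg Quot.out
      (SimpleGraph.ConnectedComponent.connectedComponentMk_eq_of_adj hxy)
  refine ⟨fun x => if r x = x then 1 else σ (r x) x, ?_, ?_, htrans⟩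
  · intro x
    by_cases h : r x = x
    · simp [h]
    · simp only [h, if_false]
      exact hσval _ _ (hreach _ _ (hrreach x) h)
  · intro x y hxy
    have hr : r x = r y := hradj x y hxy
    by_cases h1 : r x = x
    · have h2 : r y ≠ y := by rw [← hr, h1]; exact hxy.ne
      have hs : σ (r y) y = σ x y := by rw [← hr, h1]
      have := hσval x y hxy
      simp only [h1, if_true, h2, if_false, hs, one_mul]
      rcases this with h | h <;> rw [h] <;> norm_num
    · by_cases h2 : r y = y
      · have h1' : r x ≠ x := h1
        have hs : σ (r x) x = σ y x := by rw [hr, h2]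
        have := hσval x y hxy
        simp only [h1', if_false, h2, if_true, hs, mul_one, hσsym y x]
        rcases this with h | h <;> rw [h] <;> norm_num
      · have haw1 : G.Adj (r x) x := hreach _ _ (hrreach x) h1
        have haw2 : G.Adj (r x) y := by rw [hr]; exact hreach _ _ (hrreach y) h2
        have := hnt (r x) x y haw1 hxy haw2
        have hs : σ (r y) y = σ (r x) y := by rw [hr]
        simp only [h1, if_false, h2, if_false, hs]
        linarith [this]
end

section
/- Let m ≥ 2, n ≥ 3m-2 be integers, (K,w) an F_3-weighted complete graph containing no induced subgraph switching equivalent to K̃_{2m}^{(0)} or K̃_{2m}^{(-1)}, and C a (+1)-clique of (K,w) with at least n vertices. Then every vertex x of K has, for exactly one ε ∈ {0,+1,-1}, at least m (ε)-neighbors in C, and for each of the other two values ε' it has at most m-1 (ε')-neighbors in C. -/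
open Matrix

/-- The `F₃`-weighted complete graph `K̃_{2m}^{(c)}` on vertices `{0,1,…,2m}`:
all pairs among `{1,…,2m}` have weight `+1`; pairs `{0,j}` have weight `+1` for
`1 ≤ j ≤ m` and weight `c` for `m < j ≤ 2m`. -/
def KtildeMat (m : ℕ) (c : ℤ) : Matrix (Fin (2 * m + 1)) (Fin (2 * m + 1)) ℤ :=
  Matrix.of fun i j =>
    if i = j then 0
    else if i = 0 then (if (j : ℕ) ≤ m then 1 else c)
    else if j = 0 then (if (i : ℕ) ≤ m then 1 else c)
    else 1

/-- `w` contains an induced subgraph switching equivalent to the weighted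
complete graph given by the symmetric matrix `M`. -/
def HasSwitchedCopy {V : Type} (w : V → V → ℤ) {k : ℕ}
    (M : Matrix (Fin k) (Fin k) ℤ) : Prop :=
  ∃ (f : Fin k ↪ V) (ε : Fin k → ℤ), (∀ i, ε i = 1 ∨ ε i = -1) ∧
    ∀ i j, i ≠ j → ε i * w (f i) (f j) * ε j = M i j

/-!
If two of the three classes `N^{(ε₁)}(x) ∩ C`, `N^{(ε₂)}(x) ∩ C` had `m` elements each, we may take
`ε₁ = ±1`; switching at `x` when `ε₁ = -1` makes `x` together with `m` clique vertices of each class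
a copy of `K̃_{2m}^{(ε₁ ε₂)}`, and `ε₁ ε₂ ∈ {0, -1}`. So at most one class is large. Some class is:
if `x ∈ C` the `(+1)`-class is `C \ {x}`, of size `≥ 3m - 3 ≥ m`; otherwise the three classes
cover `C`, of size `≥ 3m - 2 > 3 (m - 1)`.
-/

open Finset

variable {V : Type}

/-- `N^{(ε)}(x) ∩ C` in the paper's notation. -/
def neighborsIn [DecidableEq V] (w : V → V → ℤ) (C : Finset V) (x : V) (ε : ℤ) : Finset V :=
  C.filter fun y => y ≠ x ∧ w x y = ε

lemma exists_embedding_fin_forall_mem {α : Type*} {s : Finset α} {m : ℕ} (h : m ≤ #s) :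
    ∃ f : Fin m ↪ α, ∀ i, f i ∈ s := by
  obtain ⟨t, hts, rfl⟩ := exists_subset_card_eq h
  exact ⟨t.equivFin.symm.toEmbedding.trans (Function.Embedding.subtype _),
    fun i => hts (t.equivFin.symm i).2⟩

lemma Fin.forall_append_iff {α : Type*} {m n : ℕ} {a : Fin m → α} {b : Fin n → α}
    {P : Fin (m + n) → α → Prop} :
    (∀ k, P k (Fin.append a b k)) ↔
      (∀ i, P (Fin.castAdd n i) (a i)) ∧ ∀ j, P (Fin.natAdd m j) (b j) :=
  ⟨fun h => ⟨fun i => by simpa using h (Fin.castAdd n i), fun j => by simpa using h (Fin.natAdd m j)⟩,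
    fun h k => Fin.addCases (by simpa using h.1) (by simpa using h.2) k⟩

/-- The copy sends vertex `0` of `K̃_{2m}^{(c)}` to `x` and vertex `j + 1` to `h j`; it is switched
at `x` exactly when `s = -1`. -/
lemma hasSwitchedCopy_KtildeMat {m : ℕ} {w : V → V → ℤ} (hsym : ∀ x y, w x y = w y x)
    {x : V} {h : Fin (m + m) → V} {s c : ℤ} (hs : s = 1 ∨ s = -1)
    (hinj : Function.Injective h) (hx : ∀ k, h k ≠ x)
    (hclique : ∀ k l, k ≠ l → w (h k) (h l) = 1)
    (hside : ∀ k, s * w x (h k) = if (k : ℕ) < m then 1 else c) :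
    HasSwitchedCopy w (KtildeMat m c) := by
  have hinj' : Function.Injective (h ∘ Fin.cast (two_mul m)) :=
    hinj.comp (Fin.cast_injective _)
  refine ⟨⟨Fin.cons x (h ∘ Fin.cast (two_mul m)),
    Fin.cons_injective_iff.2 ⟨fun ⟨k, hk⟩ => hx _ hk, hinj'⟩⟩, Fin.cons s 1, ?_, ?_⟩
  · intro i
    cases i using Fin.cases <;> simp [hs]
  · intro i j hij
    cases i using Fin.cases with
    | zero =>
      cases j using Fin.cases with
      | zero => exact absurd rfl hij
      | succ l => simp [KtildeMat, (Fin.succ_ne_zero l).symm, hside]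
    | succ k =>
      cases j using Fin.cases with
      | zero => simp [KtildeMat, hsym _ x, mul_comm, hside]
      | succ l =>
        have hkl : k ≠ l := mt (congrArg Fin.succ) hij
        simpa [KtildeMat, hkl] using hclique _ _ ((Fin.cast_injective (two_mul m)).ne hkl)

section Neighbors

variable [DecidableEq V] {w : V → V → ℤ} {C : Finset V} {x : V}

lemma erase_subset_neighborsIn_one (hC : ∀ x ∈ C, ∀ y ∈ C, x ≠ y → w x y = 1) (hx : x ∈ C) :
    C.erase x ⊆ neighborsIn w C x 1 := by
  intro y hy
  obtain ⟨hyx, hy⟩ := mem_erase.1 hy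
  exact mem_filter.2 ⟨hy, hyx, hC x hx y hy hyx.symm⟩

lemma erase_subset_neighborsIn_union (hval : ∀ x y, x ≠ y → w x y = 0 ∨ w x y = 1 ∨ w x y = -1) :
    C.erase x ⊆ neighborsIn w C x 0 ∪ neighborsIn w C x 1 ∪ neighborsIn w C x (-1) := by
  intro y hy
  obtain ⟨hyx, hy⟩ := mem_erase.1 hy
  simp only [neighborsIn, mem_union, mem_filter]
  rcases hval x y hyx.symm with h | h | h <;> simp [hy, hyx, h]

lemma exists_le_card_neighborsIn {m : ℕ} (hm : 2 ≤ m)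
    (hval : ∀ x y, x ≠ y → w x y = 0 ∨ w x y = 1 ∨ w x y = -1)
    (hC : ∀ x ∈ C, ∀ y ∈ C, x ≠ y → w x y = 1) (hCm : 3 * m - 2 ≤ #C) :
    ∃ ε : ℤ, (ε = 0 ∨ ε = 1 ∨ ε = -1) ∧ m ≤ #(neighborsIn w C x ε) := by
  by_cases hx : x ∈ C
  · have hcard := card_le_card (erase_subset_neighborsIn_one hC hx)
    rw [card_erase_of_mem hx] at hcard
    exact ⟨1, by norm_num, by omega⟩
  · by_contra! h
    have hcard := (card_le_card (erase_subset_neighborsIn_union (C := C) (x := x) hval)).trans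
      ((card_union_le _ _).trans (Nat.add_le_add_right (card_union_le _ _) _))
    rw [erase_eq_of_notMem hx] at hcard
    have := h 0 (by norm_num)
    have := h 1 (by norm_num)
    have := h (-1) (by norm_num)
    omega

lemma hasSwitchedCopy_of_card_neighborsIn {m : ℕ} (hsym : ∀ x y, w x y = w y x)
    (hC : ∀ x ∈ C, ∀ y ∈ C, x ≠ y → w x y = 1) {ε₁ ε₂ : ℤ} (hε₁ : ε₁ = 1 ∨ ε₁ = -1) (hne : ε₁ ≠ ε₂)
    (h₁ : m ≤ #(neighborsIn w C x ε₁)) (h₂ : m ≤ #(neighborsIn w C x ε₂)) :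
    HasSwitchedCopy w (KtildeMat m (ε₁ * ε₂)) := by
  obtain ⟨a, ha⟩ := exists_embedding_fin_forall_mem h₁
  obtain ⟨b, hb⟩ := exists_embedding_fin_forall_mem h₂
  simp only [neighborsIn, mem_filter] at ha hb
  have hab : ∀ i j, a i ≠ b j := fun i j hij => hne ((ha i).2.2.symm.trans (hij ▸ (hb j).2.2))
  have hinj := Fin.append_injective_iff.2 ⟨a.injective, b.injective, hab⟩
  have hmem : ∀ k, Fin.append a b k ∈ C :=
    Fin.forall_append_iff (P := fun _ v => v ∈ C) |>.2 ⟨fun i => (ha i).1, fun j => (hb j).1⟩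
  refine hasSwitchedCopy_KtildeMat hsym hε₁ hinj
    (Fin.forall_append_iff (P := fun _ v => v ≠ x) |>.2 ⟨fun i => (ha i).2.1, fun j => (hb j).2.1⟩)
    (fun k l hkl => hC _ (hmem k) _ (hmem l) (hinj.ne hkl))
    (Fin.forall_append_iff (P := fun k v => ε₁ * w x v = if (k : ℕ) < m then 1 else ε₁ * ε₂)
      |>.2 ⟨fun i => ?_, fun j => ?_⟩)
  · rcases hε₁ with rfl | rfl <;> simp [(ha i).2.2]
  · simp [(hb j).2.2]

lemma card_neighborsIn_lt_of_ne {m : ℕ} (hsym : ∀ x y, w x y = w y x)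
    (hC : ∀ x ∈ C, ∀ y ∈ C, x ≠ y → w x y = 1)
    (hfree0 : ¬ HasSwitchedCopy w (KtildeMat m 0))
    (hfree1 : ¬ HasSwitchedCopy w (KtildeMat m (-1)))
    {ε₁ ε₂ : ℤ} (hε₁ : ε₁ = 0 ∨ ε₁ = 1 ∨ ε₁ = -1) (hε₂ : ε₂ = 0 ∨ ε₂ = 1 ∨ ε₂ = -1)
    (hne : ε₁ ≠ ε₂) (h₁ : m ≤ #(neighborsIn w C x ε₁)) : #(neighborsIn w C x ε₂) < m := by
  by_contra! h₂
  wlog hsign : ε₁ = 1 ∨ ε₁ = -1 generalizing ε₁ ε₂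
  · exact this hε₂ hε₁ hne.symm h₂ h₁ (by omega)
  have hcopy := hasSwitchedCopy_of_card_neighborsIn hsym hC hsign hne h₁ h₂
  obtain hc | hc : ε₁ * ε₂ = 0 ∨ ε₁ * ε₂ = -1 := by
    rcases hsign with rfl | rfl <;> rcases hε₂ with rfl | rfl | rfl <;> simp_all
  · exact hfree0 (hc ▸ hcopy)
  · exact hfree1 (hc ▸ hcopy)

end Neighbors

theorem stmt15_general {V : Type} [DecidableEq V]
    (m n : ℕ) (hm : 2 ≤ m) (hn : 3 * m - 2 ≤ n)
    (w : V → V → ℤ) (hsym : ∀ x y, w x y = w y x)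
    (hval : ∀ x y, x ≠ y → w x y = 0 ∨ w x y = 1 ∨ w x y = -1)
    (hfree0 : ¬ HasSwitchedCopy w (KtildeMat m 0))
    (hfree1 : ¬ HasSwitchedCopy w (KtildeMat m (-1)))
    (C : Finset V) (hC : ∀ x ∈ C, ∀ y ∈ C, x ≠ y → w x y = 1)
    (hCn : n ≤ C.card) :
    ∀ x : V, ∃ ε : ℤ, (ε = 0 ∨ ε = 1 ∨ ε = -1) ∧
      m ≤ (C.filter fun y => y ≠ x ∧ w x y = ε).card ∧
      ∀ ε' : ℤ, (ε' = 0 ∨ ε' = 1 ∨ ε' = -1) → ε' ≠ ε →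
        (C.filter fun y => y ≠ x ∧ w x y = ε').card ≤ m - 1 := by
  intro x
  obtain ⟨ε, hε, hlarge⟩ := exists_le_card_neighborsIn (x := x) hm hval hC (hn.trans hCn)
  refine ⟨ε, hε, hlarge, fun ε' hε' hne => Nat.le_sub_one_of_lt ?_⟩
  exact card_neighborsIn_lt_of_ne hsym hC hfree0 hfree1 hε hε' hne.symm hlarge

/-- In a `{K̃_{2m}^{(0)}, K̃_{2m}^{(-1)}}`-switching-free `F₃`-weighted complete
graph, relative to a `(+1)`-clique `C` with at least `n ≥ 3m-2` vertices, every
vertex has at least `m` `(ε)`-neighbors in `C` for exactly one `ε ∈ {0,+1,-1}`,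
and at most `m-1` `(ε')`-neighbors for each other `ε'`. -/
theorem stmt15 {V : Type} [Fintype V] [DecidableEq V]
    (m n : ℕ) (hm : 2 ≤ m) (hn : 3 * m - 2 ≤ n)
    (w : V → V → ℤ) (hsym : ∀ x y, w x y = w y x)
    (hval : ∀ x y, x ≠ y → w x y = 0 ∨ w x y = 1 ∨ w x y = -1)
    (hfree0 : ¬ HasSwitchedCopy w (KtildeMat m 0))
    (hfree1 : ¬ HasSwitchedCopy w (KtildeMat m (-1)))
    (C : Finset V) (hC : ∀ x ∈ C, ∀ y ∈ C, x ≠ y → w x y = 1)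
    (hCn : n ≤ C.card) :
    ∀ x : V, ∃ ε : ℤ, (ε = 0 ∨ ε = 1 ∨ ε = -1) ∧
      m ≤ (C.filter fun y => y ≠ x ∧ w x y = ε).card ∧
      ∀ ε' : ℤ, (ε' = 0 ∨ ε' = 1 ∨ ε' = -1) → ε' ≠ ε →
        (C.filter fun y => y ≠ x ∧ w x y = ε').card ≤ m - 1 :=
  stmt15_general m n hm hn w hsym hval hfree0 hfree1 C hC hCn
end

section
/- For a Hoffman signed graph 𝔥 with a unique fat vertex positively adjacent to all slim vertices, and whose slim graph contains a slim vertex x non-positively adjacent (i.e., negatively adjacent or non-adjacent) to all other slim vertices, such that there are at least k := ⌊(λ+1)²⌋+1 other slim vertices (for a real λ < -1), the smallest eigenvalue of 𝔥 is strictly less than λ. Specifically, -S(𝔥) entrywise dominates (on the corresponding star) the matrix A(K_{1,k},+) + I, so λ_max(-S(𝔥)) ≥ √k + 1 > -λ. -/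
open Matrix

lemma rayleigh_aux17 {n : Type} [Fintype n] [DecidableEq n] [Nonempty n]
    {A : Matrix n n ℝ} (hA : A.IsHermitian) (v : n → ℝ) :
    ∃ i, hA.eigenvalues i * (v ⬝ᵥ v) ≤ v ⬝ᵥ (A *ᵥ v) := by
  classical
  set U : Matrix n n ℝ := (hA.eigenvectorUnitary : Matrix n n ℝ) with hUdef
  set e : n → ℝ := hA.eigenvalues with he
  set w : n → ℝ := star U *ᵥ v with hw
  have hstar : star U = Uᵀ := by
    ext i j; simp [Matrix.star_apply]
  have hU1 : U * star U = 1 := (Matrix.mem_unitaryGroup_iff).mp hA.eigenvectorUnitary.2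
  have hform : v ⬝ᵥ (A *ᵥ v) = ∑ i, e i * (w i * w i) := by
    conv_lhs => rw [hA.spectral_theorem, Unitary.conjStarAlgAut_apply]
    rw [Matrix.mul_assoc, ← Matrix.mulVec_mulVec, dotProduct_mulVec, ← mulVec_transpose,
      ← hstar, ← Matrix.mulVec_mulVec, ← hw, ← he]
    have : Matrix.diagonal (RCLike.ofReal ∘ e) *ᵥ w = fun i => e i * w i := by
      ext i
      simp [Matrix.mulVec_diagonal, RCLike.ofReal_real_eq_id]
    rw [this, dotProduct]
    exact Finset.sum_congr rfl fun i _ => by ring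
  have hnorm : w ⬝ᵥ w = v ⬝ᵥ v := by
    rw [hw, hstar]
    rw [show (Uᵀ *ᵥ v) ⬝ᵥ (Uᵀ *ᵥ v) = (v ᵥ* U) ⬝ᵥ (Uᵀ *ᵥ v) from by rw [mulVec_transpose],
      ← dotProduct_mulVec, Matrix.mulVec_mulVec, ← hstar, hU1, one_mulVec]
  obtain ⟨i0, _, hi0⟩ := Finset.exists_min_image Finset.univ e ⟨Classical.arbitrary n, Finset.mem_univ _⟩
  refine ⟨i0, ?_⟩
  rw [hform, ← hnorm, dotProduct, Finset.mul_sum]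
  refine Finset.sum_le_sum fun i _ => ?_
  have := mul_le_mul_of_nonneg_right (hi0 i (Finset.mem_univ i)) (mul_self_nonneg (w i))
  linarith


/-- For a Hoffman signed graph with a unique fat vertex positively adjacent to all
slim vertices (so its special matrix is `Aₛ - J`), containing a slim vertex `x`
non-positively adjacent to all others, with at least `⌊(λ+1)²⌋ + 1` other slim
vertices (`λ < -1`), we have `√(⌊(λ+1)²⌋+1) + 1 > -λ` and the smallest special
eigenvalue is strictly less than `λ`. -/
theorem stmt17 {V : Type} [Fintype V] [DecidableEq V]
    (lam : ℝ) (hlam : lam < -1)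
    (As : Matrix V V ℝ) (hAsym : As.IsSymm) (hdiag : ∀ x, As x x = 0)
    (hval : ∀ x y, As x y = 0 ∨ As x y = 1 ∨ As x y = -1)
    (x : V) (hx : ∀ y, y ≠ x → As x y ≤ 0)
    (hcard : Int.floor ((lam + 1) ^ 2) + 1 ≤ (Fintype.card V : ℤ) - 1) :
    Real.sqrt ((Int.floor ((lam + 1) ^ 2) : ℝ) + 1) + 1 > -lam ∧
    ∃ μ ∈ spectrum ℝ (As - Matrix.of fun _ _ => (1 : ℝ)), μ < lam := by
  classical
  have hk0 : (0:ℤ) ≤ ⌊(lam + 1) ^ 2⌋ := Int.floor_nonneg.mpr (sq_nonneg _)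
  -- Part 1
  have hpart1 : Real.sqrt ((Int.floor ((lam + 1) ^ 2) : ℝ) + 1) + 1 > -lam := by
    have h1 : (lam + 1)^2 < (⌊(lam+1)^2⌋ : ℝ) + 1 := Int.lt_floor_add_one _
    have h2 : (0:ℝ) ≤ -(lam + 1) := by linarith
    have h3 : -(lam+1) < Real.sqrt ((⌊(lam + 1) ^ 2⌋ : ℝ) + 1) := by
      rw [show ((⌊(lam + 1) ^ 2⌋:ℝ) + 1) = Real.sqrt ((⌊(lam + 1) ^ 2⌋:ℝ) + 1) ^ 2 from
        (Real.sq_sqrt (by positivity : (0:ℝ) ≤ (⌊(lam + 1) ^ 2⌋:ℝ) + 1)).symm] at h1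
      nlinarith [Real.sqrt_nonneg ((⌊(lam + 1) ^ 2⌋:ℝ) + 1), sq_nonneg (lam+1)]
    linarith
  refine ⟨hpart1, ?_⟩
  -- Setup
  have hcard2 : 2 ≤ Fintype.card V := by omega
  have : Nonempty V := Fintype.card_pos_iff.mp (by omega)
  set N : ℕ := Fintype.card V - 1 with hNdef
  have hcardN : Fintype.card V = N + 1 := by omega
  have hkN : (⌊(lam + 1) ^ 2⌋ : ℝ) + 1 ≤ (N:ℝ) := by
    have : (⌊(lam + 1) ^ 2⌋ : ℤ) + 1 ≤ (N:ℤ) := by omega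
    exact_mod_cast this
  have hN1 : 1 ≤ N := by omega
  set S : Matrix V V ℝ := As - Matrix.of fun _ _ => (1 : ℝ) with hSdef
  have hSapp : ∀ y z, S y z = As y z - 1 := fun y z => rfl
  have hsym : ∀ y z, As y z = As z y := fun y z => (hAsym.apply y z).symm
  have hSherm : S.IsHermitian := by
    ext y z
    simp only [Matrix.conjTranspose_apply, star_trivial, hSapp, hsym y z]
  set s : ℝ := Real.sqrt N with hsdef
  have hs0 : 0 ≤ s := Real.sqrt_nonneg _
  have hs2 : s * s = (N:ℝ) := Real.mul_self_sqrt (Nat.cast_nonneg _)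
  set v : V → ℝ := fun y => if y = x then s else 1 with hvdef
  have hv0 : ∀ y, 0 ≤ v y := by
    intro y; by_cases h : y = x <;> simp [hvdef, h, hs0]
  have hvx : v x = s := by simp [hvdef]
  have hvy : ∀ y, y ≠ x → v y = 1 := by intro y hy; simp [hvdef, hy]
  have hcardE : (Finset.univ.erase x).card = N := by
    rw [Finset.card_erase_of_mem (Finset.mem_univ x), Finset.card_univ, hcardN]
    omega
  -- sum of v
  have hsumv : ∑ y, v y = s + N := by
    rw [← Finset.add_sum_erase _ v (Finset.mem_univ x), hvx,
      Finset.sum_congr rfl (fun y hy => hvy y (Finset.ne_of_mem_erase hy)),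
      Finset.sum_const, hcardE, nsmul_eq_mul, mul_one]
  have hvv : v ⬝ᵥ v = 2 * N := by
    show ∑ y, v y * v y = 2 * (N:ℝ)
    rw [← Finset.add_sum_erase _ (fun y => v y * v y) (Finset.mem_univ x), hvx,
      Finset.sum_congr rfl (fun y hy => by rw [hvy y (Finset.ne_of_mem_erase hy), mul_one]),
      Finset.sum_const, hcardE, nsmul_eq_mul, mul_one, hs2]
    ring
  -- inner sum bounds
  have hmv : ∀ y, (S *ᵥ v) y = ∑ z, S y z * v z := fun y => rfl
  have hIx : (S *ᵥ v) x ≤ -(s + (N:ℝ)) := by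
    rw [hmv]
    calc ∑ z, S x z * v z ≤ ∑ z, -v z := by
          refine Finset.sum_le_sum fun z _ => ?_
          by_cases hz : z = x
          · subst hz; rw [hSapp, hdiag, hvx]; ring_nf; linarith [hs0]
          · rw [hSapp, hvy z hz]
            have := hx z (by simpa using hz)
            rw [hsym x z] at this ⊢
            linarith
      _ = -(s + N) := by rw [Finset.sum_neg_distrib, hsumv]
  have hIy : ∀ y, y ≠ x → (S *ᵥ v) y ≤ -(1 + s) := by
    intro y hy
    rw [hmv]
    calc ∑ z, S y z * v z
        ≤ ∑ z, ((if z = y then (-1:ℝ) else 0) + (if z = x then -s else 0)) := by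
          refine Finset.sum_le_sum fun z _ => ?_
          by_cases hzy : z = y
          · subst hzy
            rw [hSapp, hdiag, hvy z hy, if_pos rfl, if_neg hy]
            norm_num
          · by_cases hzx : z = x
            · rw [hzx, hSapp, hvx, if_neg (hzx ▸ hzy), if_pos rfl, zero_add]
              have h1 : As y x ≤ 0 := by rw [hsym y x]; exact hx y hy
              nlinarith [hs0]
            · rw [hSapp, hvy z hzx, if_neg hzy, if_neg hzx, mul_one, add_zero]
              rcases hval y z with h | h | h <;> rw [h] <;> norm_num
      _ = -(1 + s) := by
          rw [Finset.sum_add_distrib, Finset.sum_ite_eq' Finset.univ y (fun _ => (-1:ℝ)),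
            Finset.sum_ite_eq' Finset.univ x (fun _ => -s)]
          simp; ring
  -- quadratic form bound
  have hQ : v ⬝ᵥ (S *ᵥ v) ≤ -(2*N) - 2*s*N := by
    show ∑ y, v y * (S *ᵥ v) y ≤ -(2*(N:ℝ)) - 2*s*N
    rw [← Finset.add_sum_erase _ (fun y => v y * (S *ᵥ v) y) (Finset.mem_univ x), hvx]
    have h1 : s * (S *ᵥ v) x ≤ s * (-(s + N)) := mul_le_mul_of_nonneg_left hIx hs0
    have h2 : ∑ y ∈ Finset.univ.erase x, v y * (S *ᵥ v) y ≤ (N:ℝ) * (-(1+s)) := by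
      calc ∑ y ∈ Finset.univ.erase x, v y * (S *ᵥ v) y
          ≤ ∑ y ∈ Finset.univ.erase x, -(1+s) := by
            refine Finset.sum_le_sum fun y hy => ?_
            have hyx := Finset.ne_of_mem_erase hy
            rw [hvy y hyx, one_mul]
            exact hIy y hyx
        _ = (N:ℝ) * (-(1+s)) := by rw [Finset.sum_const, hcardE, nsmul_eq_mul]
    nlinarith [hs2]
  -- conclude via Rayleigh
  obtain ⟨i, hi⟩ := rayleigh_aux17 hSherm v
  refine ⟨hSherm.eigenvalues i, hSherm.eigenvalues_mem_spectrum_real i, ?_⟩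
  have hsk : Real.sqrt ((⌊(lam + 1) ^ 2⌋ : ℝ) + 1) ≤ s :=
    Real.sqrt_le_sqrt hkN
  have hls : -(1 + s) < lam := by linarith
  have hNpos : (0:ℝ) < 2 * N := by
    have : (0:ℝ) < (N:ℝ) := by exact_mod_cast hN1
    linarith
  have hfin : hSherm.eigenvalues i * (2*N) < lam * (2*N) := by
    rw [hvv] at hi
    have : -(2*(N:ℝ)) - 2*s*N < lam * (2*N) := by nlinarith
    linarith
  exact (mul_lt_mul_iff_left₀ hNpos).mp hfin
end

section
/- Let 𝔥 be a Hoffman signed graph with exactly two fat vertices, each positively adjacent to all k := ⌊-λ⌋ slim vertices, where λ < -1 is real. Then every diagonal entry of S(𝔥) is -2 and every off-diagonal entry is at most -1, hence λ_max(-S(𝔥)) ≥ λ_max(A(K_k,+) + 2I) = k + 1 > -λ, so λ_min(𝔥) < λ. -/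
open Matrix

/-- For a Hoffman signed graph with exactly two fat vertices, each positively
adjacent to all `⌊-λ⌋` slim vertices (`λ < -1`), the special matrix `Aₛ - 2J`
has all diagonal entries `-2`, all off-diagonal entries at most `-1`, and its
smallest eigenvalue is strictly less than `λ`. -/
theorem stmt18 {V : Type} [Fintype V] [DecidableEq V]
    (lam : ℝ) (hlam : lam < -1)
    (As : Matrix V V ℝ) (hAsym : As.IsSymm) (hdiag : ∀ x, As x x = 0)
    (hval : ∀ x y, As x y = 0 ∨ As x y = 1 ∨ As x y = -1)
    (hcard : (Fintype.card V : ℤ) = Int.floor (-lam))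
    (J : Matrix V V ℝ) (hJ : J = Matrix.of fun _ _ => (1 : ℝ)) :
    (∀ x, (As - (2 : ℝ) • J) x x = -2) ∧
    (∀ x y, x ≠ y → (As - (2 : ℝ) • J) x y ≤ -1) ∧
    ∃ μ ∈ spectrum ℝ (As - (2 : ℝ) • J), μ < lam := by
  set S : Matrix V V ℝ := As - (2 : ℝ) • J with hS
  set k : ℕ := Fintype.card V with hk
  have hk1 : 1 ≤ (k : ℤ) := by
    rw [hcard]
    have : (1 : ℝ) ≤ -lam := by linarith
    exact_mod_cast Int.le_floor.mpr (by exact_mod_cast this)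
  have hkpos : 0 < k := by exact_mod_cast hk1
  have hlamgt : -((k : ℝ) + 1) < lam := by
    have h2 : (-lam : ℝ) < (k : ℝ) + 1 := by
      have := Int.lt_floor_add_one (-lam)
      rw [← hcard] at this
      push_cast at this
      linarith
    linarith
  have hSd : ∀ x, S x x = -2 := by
    intro x
    simp [hS, hJ, hdiag x]
  have hSo : ∀ x y, x ≠ y → S x y ≤ -1 := by
    intro x y hxy
    have : As x y ≤ 1 := by rcases hval x y with h | h | h <;> simp [h] <;> norm_num
    simp only [hS, hJ, Matrix.sub_apply, Matrix.smul_apply, of_apply, smul_eq_mul, mul_one]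
    linarith
  refine ⟨hSd, hSo, ?_⟩
  -- S is hermitian
  have hSym : S.IsHermitian := by
    ext i j
    simp only [conjTranspose_apply, star_trivial]
    by_cases h : i = j
    · subst h; rfl
    · simp only [hS, hJ, Matrix.sub_apply, Matrix.smul_apply, of_apply, smul_eq_mul, mul_one]
      have := hAsym.apply i j
      rw [this]
  set e := hSym.eigenvalues with he
  set U : Matrix V V ℝ := (hSym.eigenvectorUnitary : Matrix V V ℝ) with hU
  have hUU : U * star U = 1 := (Matrix.mem_unitaryGroup_iff).mp hSym.eigenvectorUnitary.2
  set x : V → ℝ := fun _ => 1 with hx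
  set y : V → ℝ := star U *ᵥ x with hy
  have hynz : y ≠ 0 := by
    intro h0
    have : x = 0 := by
      have : U *ᵥ y = (U * star U) *ᵥ x := by rw [hy, mulVec_mulVec]
      rw [h0, mulVec_zero, hUU, one_mulVec] at this
      exact this.symm
    obtain ⟨v⟩ := Fintype.card_pos_iff.mp hkpos
    have := congrFun this v
    simp [hx] at this
  -- quadratic form value
  have hq1 : x ⬝ᵥ (S *ᵥ x) = ∑ i, ∑ j, S i j := by
    simp [dotProduct, mulVec, hx]
  have hstar : star U = Uᵀ := by
    ext i j; simp [Matrix.star_eq_conjTranspose, Matrix.conjTranspose_apply]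
  have key : ∀ (M : Matrix V V ℝ) (a b : V → ℝ), a ⬝ᵥ (M *ᵥ b) = (Mᵀ *ᵥ a) ⬝ᵥ b := by
    intro M a b
    simp only [dotProduct, mulVec, dotProduct, transpose_apply, Finset.mul_sum, Finset.sum_mul]
    rw [Finset.sum_comm]
    exact Finset.sum_congr rfl fun i _ => Finset.sum_congr rfl fun j _ => by ring
  have hq2 : x ⬝ᵥ (S *ᵥ x) = ∑ i, e i * (y i)^2 := by
    calc x ⬝ᵥ (S *ᵥ x) = x ⬝ᵥ ((U * diagonal (RCLike.ofReal ∘ e) * star U) *ᵥ x) := by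
          exact (congrArg (fun M => x ⬝ᵥ (M *ᵥ x)) hSym.spectral_theorem).trans rfl
      _ = x ⬝ᵥ (U *ᵥ (diagonal (RCLike.ofReal ∘ e) *ᵥ y)) := by
          rw [← mulVec_mulVec, ← mulVec_mulVec, hy]
      _ = y ⬝ᵥ (diagonal (RCLike.ofReal ∘ e) *ᵥ y) := by
          rw [key, hy, hstar]
      _ = ∑ i, e i * (y i)^2 := by
          simp only [dotProduct, mulVec_diagonal, Function.comp_apply, RCLike.ofReal_real_eq_id,
            id_eq]
          exact Finset.sum_congr rfl fun i _ => by ring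
  have hUy : U *ᵥ y = x := by
    rw [hy, mulVec_mulVec, hUU, one_mulVec]
  have hsumy : ∑ i, (y i)^2 = (k : ℝ) := by
    have h1 : y ⬝ᵥ y = (k : ℝ) := by
      calc y ⬝ᵥ y = y ⬝ᵥ (Uᵀ *ᵥ x) := by rw [← hstar, ← hy]
        _ = (U *ᵥ y) ⬝ᵥ x := by rw [key, transpose_transpose]
        _ = x ⬝ᵥ x := by rw [hUy]
        _ = (k : ℝ) := by simp [dotProduct, hx, hk]
    rw [← h1]
    simp [dotProduct, sq]
  -- entrywise bound
  have hqle : x ⬝ᵥ (S *ᵥ x) ≤ -((k:ℝ) * ((k:ℝ) + 1)) := by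
    rw [hq1]
    have hbound : ∀ i j : V, S i j ≤ if i = j then -2 else -1 := by
      intro i j
      by_cases h : i = j
      · simp [h, hSd j]
      · simp [h]; exact hSo i j h
    have hrow : ∀ i : V, ∑ j : V, (if i = j then (-2:ℝ) else -1) = -1 - (k:ℝ) := by
      intro i
      have : ∀ j : V, (if i = j then (-2:ℝ) else -1) = (-1) + (if i = j then (-1:ℝ) else 0) := by
        intro j; by_cases h : i = j <;> simp [h] <;> norm_num
      rw [Finset.sum_congr rfl fun j _ => this j, Finset.sum_add_distrib,
        Finset.sum_ite_eq Finset.univ i (fun _ => (-1:ℝ))]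
      simp [hk]
      ring
    calc ∑ i, ∑ j, S i j ≤ ∑ i : V, ∑ j : V, (if i = j then (-2:ℝ) else -1) :=
          Finset.sum_le_sum fun i _ => Finset.sum_le_sum fun j _ => hbound i j
      _ = ∑ i : V, (-1 - (k:ℝ)) := Finset.sum_congr rfl fun i _ => hrow i
      _ = -((k:ℝ) * ((k:ℝ) + 1)) := by
          rw [Finset.sum_const]
          simp [hk]; ring
  -- exists small eigenvalue
  have hex : ∃ i, e i ≤ -((k:ℝ) + 1) := by
    by_contra hcon
    push_neg at hcon
    have hgt : ∑ i, -((k:ℝ)+1) * (y i)^2 < ∑ i, e i * (y i)^2 := by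
      obtain ⟨i0, hi0⟩ := Function.ne_iff.mp hynz
      apply Finset.sum_lt_sum
      · intro i _
        have := hcon i
        nlinarith [sq_nonneg (y i)]
      · refine ⟨i0, Finset.mem_univ i0, ?_⟩
        have h1 : 0 < (y i0)^2 := sq_pos_of_ne_zero hi0
        nlinarith [hcon i0]
    rw [← Finset.mul_sum, hsumy, ← hq2] at hgt
    nlinarith
  obtain ⟨i, hi⟩ := hex
  exact ⟨e i, hSym.eigenvalues_mem_spectrum_real i, lt_of_le_of_lt hi (by linarith)⟩
end
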